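/- arXiv:2412.19338 — 3 statements merged into one kernel-verified Lean document; each statement's English description precedes it below -/
import Mathlib

section
/- The function f(z₁,z₂,z₃,z₄) = e^{z₂+2z₃-z₄-2} - (-z₁/2 - z₂ + z₃ + z₄)² on ℂ⁴ satisfies the equation (∂f/∂z₁)² + f(z₁+14, z₂+1, z₃+3, z₄+5) = e^{z₂+2z₃-z₄} identically on ℂ⁴. -/
/-! With `q = -z₁/2 - z₂ + z₃ + z₄`, the derivative `∂f/∂z₁ = -2q · (-1/2)` is `q` itself, while the
shift `(14, 1, 3, 5)` leaves `q` unchanged and raises the exponent `z₂ + 2z₃ - z₄ - 2` by `2`;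
so the two `q²` terms cancel. -/

noncomputable def f1 (z₁ z₂ z₃ z₄ : ℂ) : ℂ :=
  Complex.exp (z₂ + 2 * z₃ - z₄ - 2) - (-z₁ / 2 - z₂ + z₃ + z₄) ^ 2

theorem hasDerivAt_f1_fst (z₁ z₂ z₃ z₄ : ℂ) :
    HasDerivAt (fun w => f1 w z₂ z₃ z₄) (-z₁ / 2 - z₂ + z₃ + z₄) z₁ := by
  have hq : HasDerivAt (fun w : ℂ => -w / 2 - z₂ + z₃ + z₄) (-1 / 2) z₁ := by
    simpa using ((((hasDerivAt_id z₁).neg.div_const 2).sub_const z₂).add_const z₃).add_const z₄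
  exact ((hq.pow 2).const_sub _).congr_deriv (by ring)

theorem f1_shift (z₁ z₂ z₃ z₄ : ℂ) :
    f1 (z₁ + 14) (z₂ + 1) (z₃ + 3) (z₄ + 5)
      = Complex.exp (z₂ + 2 * z₃ - z₄) - (-z₁ / 2 - z₂ + z₃ + z₄) ^ 2 := by
  unfold f1
  congr 2 <;> ring

theorem stmt_1 : ∀ z₁ z₂ z₃ z₄ : ℂ,
    (deriv (fun w => f1 w z₂ z₃ z₄) z₁) ^ 2
      + f1 (z₁ + 14) (z₂ + 1) (z₃ + 3) (z₄ + 5)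
      = Complex.exp (z₂ + 2 * z₃ - z₄) := by
  intro z₁ z₂ z₃ z₄
  rw [(hasDerivAt_f1_fst z₁ z₂ z₃ z₄).deriv, f1_shift]
  ring
end

section
/- Let c = (c₁, c₂) ∈ ℂ² with c₂ ≠ 0, and let G₁ : ℂ → ℂ be an entire function with period c₂. Then the function f(z₁,z₂) = 1 - c₁²/4 - z₁²/4 + (c₁/(2c₂))·z₁z₂ - (c₁²/(2c₂))·(z₂-c₂) + (z₁-c₁)·G₁(z₂) - ((c₁/(2c₂))·(z₂-c₂) + G₁(z₂))² satisfies (∂f/∂z₁)² + f(z₁+c₁, z₂+c₂) = 1 identically on ℂ². -/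
/-! As a function of `z₁` alone, `f` is the quadratic `A(z₂) + B(z₂) z₁ - z₁² / 4` with
`B(z₂) = c₁ z₂ / (2 c₂) + G₁(z₂)`, so `∂f/∂z₁ = B(z₂) - z₁ / 2`. The shift `z₂ ↦ z₂ + c₂` leaves
`G₁` unchanged and turns `(c₁ / (2 c₂)) (z₂ - c₂)` into `(c₁ / (2 c₂)) z₂`, so the last square in
`f(z₁ + c₁, z₂ + c₂)` is `B(z₂)²`, which cancels against `(∂f/∂z₁)²`; the remaining terms sum
to `1` once `c₂ · c₁ / (2 c₂) = c₁ / 2`. -/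

theorem hasDerivAt_sub_sq_div_four_add_mul {𝕜 : Type*} [NontriviallyNormedField 𝕜] [CharZero 𝕜]
    (A B z : 𝕜) : HasDerivAt (fun w => A - w ^ 2 / 4 + B * w) (-z / 2 + B) z := by
  have h := (((hasDerivAt_pow 2 z).div_const 4).const_sub A).add ((hasDerivAt_id z).const_mul B)
  exact h.congr_deriv (by norm_num; ring)

theorem stmt_11_general (c₁ c₂ : ℂ) (hc₂ : c₂ ≠ 0) (G₁ : ℂ → ℂ)
    (hper : ∀ z : ℂ, G₁ (z + c₂) = G₁ z)
    (f : ℂ → ℂ → ℂ)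
    (hf : ∀ z₁ z₂ : ℂ, f z₁ z₂ =
      1 - c₁ ^ 2 / 4 - z₁ ^ 2 / 4 + (c₁ / (2 * c₂)) * z₁ * z₂
        - (c₁ ^ 2 / (2 * c₂)) * (z₂ - c₂) + (z₁ - c₁) * G₁ z₂
        - ((c₁ / (2 * c₂)) * (z₂ - c₂) + G₁ z₂) ^ 2) :
    ∀ z₁ z₂ : ℂ,
      (deriv (fun w => f w z₂) z₁) ^ 2 + f (z₁ + c₁) (z₂ + c₂) = 1 := by
  intro z₁ z₂
  set B := c₁ / (2 * c₂) * z₂ + G₁ z₂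
  have hf_quadratic : (fun w => f w z₂) = fun w =>
      (1 - c₁ ^ 2 / 4 - (c₁ ^ 2 / (2 * c₂)) * (z₂ - c₂) - c₁ * G₁ z₂
        - ((c₁ / (2 * c₂)) * (z₂ - c₂) + G₁ z₂) ^ 2) - w ^ 2 / 4 + B * w :=
    funext fun w => by rw [hf]; ring
  have hderiv : deriv (fun w => f w z₂) z₁ = -z₁ / 2 + B := by
    rw [hf_quadratic]
    exact (hasDerivAt_sub_sq_div_four_add_mul _ _ _).deriv
  rw [hderiv, hf, hper]
  simp only [B]
  field_simp
  ring

theorem stmt_11 (c₁ c₂ : ℂ) (hc₂ : c₂ ≠ 0) (G₁ : ℂ → ℂ)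
    (hG : Differentiable ℂ G₁) (hper : ∀ z : ℂ, G₁ (z + c₂) = G₁ z)
    (f : ℂ → ℂ → ℂ)
    (hf : ∀ z₁ z₂ : ℂ, f z₁ z₂ =
      1 - c₁ ^ 2 / 4 - z₁ ^ 2 / 4 + (c₁ / (2 * c₂)) * z₁ * z₂
        - (c₁ ^ 2 / (2 * c₂)) * (z₂ - c₂) + (z₁ - c₁) * G₁ z₂
        - ((c₁ / (2 * c₂)) * (z₂ - c₂) + G₁ z₂) ^ 2) :
    ∀ z₁ z₂ : ℂ,
      (deriv (fun w => f w z₂) z₁) ^ 2 + f (z₁ + c₁) (z₂ + c₂) = 1 :=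
  stmt_11_general c₁ c₂ hc₂ G₁ hper f hf
end

section
/- Let c = (c₁, c₂) ∈ ℂ² with c₂ ≠ c₁, set a₃ = c₁/(2(c₂-c₁)), and let G₂ : ℂ → ℂ be an entire function with period c₂-c₁. Then the function f(z₁,z₂) = 1 - c₁²/4 - z₁²/4 + z₁·(G₂(z₂-z₁) + a₃·(z₂-z₁)) - c₁·G₂(z₂-z₁) - a₃c₁·(z₂-z₁-(c₂-c₁)) - (G₂(z₂-z₁) + a₃·(z₂-z₁-(c₂-c₁)))² satisfies (∂f/∂z₁ + ∂f/∂z₂)² + f(z₁+c₁, z₂+c₂) = 1 identically on ℂ². -/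
set_option maxHeartbeats 1000000


theorem stmt_12 (c₁ c₂ : ℂ) (hc : c₂ ≠ c₁) (G₂ : ℂ → ℂ)
    (hG : Differentiable ℂ G₂) (hper : ∀ w : ℂ, G₂ (w + (c₂ - c₁)) = G₂ w)
    (a₃ : ℂ) (ha₃ : a₃ = c₁ / (2 * (c₂ - c₁)))
    (f : ℂ → ℂ → ℂ)
    (hf : ∀ z₁ z₂ : ℂ, f z₁ z₂ =
      1 - c₁ ^ 2 / 4 - z₁ ^ 2 / 4
        + z₁ * (G₂ (z₂ - z₁) + a₃ * (z₂ - z₁))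
        - c₁ * G₂ (z₂ - z₁) - a₃ * c₁ * (z₂ - z₁ - (c₂ - c₁))
        - (G₂ (z₂ - z₁) + a₃ * (z₂ - z₁ - (c₂ - c₁))) ^ 2) :
    ∀ z₁ z₂ : ℂ,
      (deriv (fun w => f w z₂) z₁ + deriv (fun w => f z₁ w) z₂) ^ 2
        + f (z₁ + c₁) (z₂ + c₂) = 1 := by
  intro z₁ z₂
  set d : ℂ := deriv G₂ (z₂ - z₁) with hd
  have hG' : HasDerivAt G₂ d (z₂ - z₁) := (hG (z₂ - z₁)).hasDerivAt
  -- partial in first variable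
  have h0 : HasDerivAt (fun w : ℂ => z₂ - w) (-1) z₁ := by
    simpa using (hasDerivAt_id z₁).const_sub z₂
  have hGc : HasDerivAt (fun w : ℂ => G₂ (z₂ - w)) (d * (-1)) z₁ :=
    hG'.comp z₁ h0
  have hfe1 : (fun w => f w z₂) = (fun w =>
      1 - c₁ ^ 2 / 4 - w ^ 2 / 4
        + w * (G₂ (z₂ - w) + a₃ * (z₂ - w))
        - c₁ * G₂ (z₂ - w) - a₃ * c₁ * (z₂ - w - (c₂ - c₁))
        - (G₂ (z₂ - w) + a₃ * (z₂ - w - (c₂ - c₁))) ^ 2) :=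
    funext fun w => hf w z₂
  have h1 : HasDerivAt (fun w => f w z₂)
      (((0 - (2 * z₁ ^ 1) / 4
        + (1 * (G₂ (z₂ - z₁) + a₃ * (z₂ - z₁)) + z₁ * (d * (-1) + a₃ * (-1)))
        - c₁ * (d * (-1)) - a₃ * c₁ * (-1))
        - 2 * (G₂ (z₂ - z₁) + a₃ * (z₂ - z₁ - (c₂ - c₁))) ^ 1 * (d * (-1) + a₃ * (-1)))) z₁ := by
    rw [hfe1]
    exact (((((hasDerivAt_const z₁ (1 - c₁ ^ 2 / 4)).sub
      ((hasDerivAt_pow 2 z₁).div_const 4)).add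
      ((hasDerivAt_id z₁).mul (hGc.add (h0.const_mul a₃)))).sub
      (hGc.const_mul c₁)).sub
      ((h0.sub_const (c₂ - c₁)).const_mul (a₃ * c₁))).sub
      ((hGc.add ((h0.sub_const (c₂ - c₁)).const_mul a₃)).pow 2)
  -- partial in second variable
  have h0' : HasDerivAt (fun w : ℂ => w - z₁) 1 z₂ := by
    simpa using (hasDerivAt_id z₂).sub_const z₁
  have hGc' : HasDerivAt (fun w : ℂ => G₂ (w - z₁)) (d * 1) z₂ :=
    hG'.comp z₂ h0'
  have hfe2 : (fun w => f z₁ w) = (fun w =>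
      1 - c₁ ^ 2 / 4 - z₁ ^ 2 / 4
        + z₁ * (G₂ (w - z₁) + a₃ * (w - z₁))
        - c₁ * G₂ (w - z₁) - a₃ * c₁ * (w - z₁ - (c₂ - c₁))
        - (G₂ (w - z₁) + a₃ * (w - z₁ - (c₂ - c₁))) ^ 2) :=
    funext fun w => hf z₁ w
  have h2 : HasDerivAt (fun w => f z₁ w)
      (((0
        + (0 * (G₂ (z₂ - z₁) + a₃ * (z₂ - z₁)) + z₁ * (d * 1 + a₃ * 1))
        - c₁ * (d * 1) - a₃ * c₁ * 1)
        - 2 * (G₂ (z₂ - z₁) + a₃ * (z₂ - z₁ - (c₂ - c₁))) ^ 1 * (d * 1 + a₃ * 1))) z₂ := by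
    rw [hfe2]
    exact (((((hasDerivAt_const z₂ (1 - c₁ ^ 2 / 4 - z₁ ^ 2 / 4)).add
      ((hasDerivAt_const z₂ z₁).mul (hGc'.add (h0'.const_mul a₃)))).sub
      (hGc'.const_mul c₁)).sub
      ((h0'.sub_const (c₂ - c₁)).const_mul (a₃ * c₁))).sub
      ((hGc'.add ((h0'.sub_const (c₂ - c₁)).const_mul a₃)).pow 2))
  rw [h1.deriv, h2.deriv, hf]
  have hsh : z₂ + c₂ - (z₁ + c₁) = (z₂ - z₁) + (c₂ - c₁) := by ring
  rw [hsh, hper]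
  have hne : c₂ - c₁ ≠ 0 := sub_ne_zero.mpr hc
  have hq : a₃ * (c₂ - c₁) = c₁ / 2 := by
    rw [ha₃]; field_simp
  linear_combination (z₁ + c₁) * hq
end
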